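/- arXiv:1705.03188 — 7 statements merged into one kernel-verified Lean document; each statement's English description precedes it below -/
import Mathlib

section
/- Let F be ℝ or ℂ and let n ≥ 2. Suppose ℓ_1, …, ℓ_p are homogeneous linear forms in F[x_1,…,x_n] and L_1, …, L_n are linearly independent homogeneous linear forms in F[x_1,…,x_n] such that ℓ_1·ℓ_2⋯ℓ_p = ∏_{1 ≤ i < j ≤ n} (L_i − L_j). Then p = n(n−1)/2 and the dimension of the F-linear span of {ℓ_1, …, ℓ_p} equals n − 1. -/
open MvPolynomial

/-- A homogeneous linear form `c₁x₁ + ⋯ + cₙxₙ`. -/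
def IsHomLin {F : Type*} [Field F] {n : ℕ} (f : MvPolynomial (Fin n) F) : Prop :=
  ∃ c : Fin n → F, f = ∑ j, C (c j) * X j

/-! Linear forms are prime in the polynomial ring, and a linear form dividing another one is a
scalar multiple of it. So by unique factorisation every `ℓ k` is a multiple of some `L i - L j`
and conversely, and the `ℓ k` span the same space as the differences `L i - L j`: the vector span
of the affinely independent points `L 1, …, L n`, of dimension `n - 1`. Comparing the degrees of
the two homogeneous products gives `p = n(n-1)/2`. -/

namespace MvPolynomial

variable {σ F : Type*} [Field F]

theorem prime_of_isHomogeneous_one {f : MvPolynomial σ F} (hf : f.IsHomogeneous 1)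
    (h0 : f ≠ 0) : Prime f := by
  refine (irreducible_of_totalDegree_eq_one (hf.totalDegree h0) fun a ha => ?_).prime
  refine isUnit_iff_ne_zero.mpr fun ha0 => h0 ?_
  ext m
  simpa [ha0] using ha m

theorem mem_span_singleton_of_dvd {f g : MvPolynomial σ F} (hf : f.IsHomogeneous 1)
    (hg : g.IsHomogeneous 1) (hg0 : g ≠ 0) (hfg : f ∣ g) : f ∈ Submodule.span F {g} := by
  obtain ⟨h, rfl⟩ := hfg
  have hf0 : f ≠ 0 := left_ne_zero_of_mul hg0
  have hh0 : h ≠ 0 := right_ne_zero_of_mul hg0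
  have hdeg := totalDegree_mul_of_isDomain hf0 hh0
  rw [hg.totalDegree hg0, hf.totalDegree hf0] at hdeg
  obtain ⟨a, rfl⟩ : ∃ a, h = C a := ⟨_, totalDegree_eq_zero_iff_eq_C.mp (by omega)⟩
  have ha : a ≠ 0 := by rintro rfl; simp at hh0
  refine Submodule.mem_span_singleton.mpr ⟨a⁻¹, ?_⟩
  rw [smul_eq_C_mul, mul_left_comm, ← C_mul, inv_mul_cancel₀ ha, C_1, mul_one]

theorem mem_span_image_of_dvd_prod {ι : Type*} {s : Finset ι} {f : MvPolynomial σ F}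
    {g : ι → MvPolynomial σ F} (hf : f.IsHomogeneous 1) (hg : ∀ i ∈ s, (g i).IsHomogeneous 1)
    (hf0 : f ≠ 0) (hg0 : ∏ i ∈ s, g i ≠ 0) (hdvd : f ∣ ∏ i ∈ s, g i) :
    f ∈ Submodule.span F (g '' s) := by
  obtain ⟨i, hi, hfi⟩ := (prime_of_isHomogeneous_one hf hf0).exists_mem_finset_dvd hdvd
  have hgi : g i ≠ 0 := Finset.prod_ne_zero_iff.mp hg0 i hi
  exact Submodule.span_mono (Set.singleton_subset_iff.mpr (Set.mem_image_of_mem g hi))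
    (mem_span_singleton_of_dvd hf (hg i hi) hgi hfi)

section ProductsOfLinearForms

variable {ι κ : Type*} {s : Finset ι} {t : Finset κ} {f : ι → MvPolynomial σ F}
  {g : κ → MvPolynomial σ F}

theorem span_image_le_of_prod_eq (hf : ∀ i ∈ s, (f i).IsHomogeneous 1)
    (hg : ∀ j ∈ t, (g j).IsHomogeneous 1) (h0 : ∏ i ∈ s, f i ≠ 0)
    (h : ∏ i ∈ s, f i = ∏ j ∈ t, g j) :
    Submodule.span F (f '' s) ≤ Submodule.span F (g '' t) := by
  rw [Submodule.span_le]
  rintro _ ⟨i, hi, rfl⟩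
  exact mem_span_image_of_dvd_prod (hf i hi) hg (Finset.prod_ne_zero_iff.mp h0 i hi) (h ▸ h0)
    (h ▸ Finset.dvd_prod_of_mem f hi)

theorem span_image_eq_of_prod_eq (hf : ∀ i ∈ s, (f i).IsHomogeneous 1)
    (hg : ∀ j ∈ t, (g j).IsHomogeneous 1) (h0 : ∏ i ∈ s, f i ≠ 0)
    (h : ∏ i ∈ s, f i = ∏ j ∈ t, g j) :
    Submodule.span F (f '' s) = Submodule.span F (g '' t) :=
  le_antisymm (span_image_le_of_prod_eq hf hg h0 h)
    (span_image_le_of_prod_eq hg hf (h ▸ h0) h.symm)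

theorem card_eq_of_prod_eq (hf : ∀ i ∈ s, (f i).IsHomogeneous 1)
    (hg : ∀ j ∈ t, (g j).IsHomogeneous 1) (h0 : ∏ i ∈ s, f i ≠ 0)
    (h : ∏ i ∈ s, f i = ∏ j ∈ t, g j) : s.card = t.card := by
  have hs := IsHomogeneous.prod s f (fun _ => 1) hf
  have ht := IsHomogeneous.prod t g (fun _ => 1) hg
  simp only [Finset.sum_const, smul_eq_mul, mul_one] at hs ht
  exact hs.inj_right (h ▸ ht) h0

end ProductsOfLinearForms

end MvPolynomial

theorem IsHomLin.isHomogeneous {F : Type*} [Field F] {n : ℕ} {f : MvPolynomial (Fin n) F}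
    (hf : IsHomLin f) : f.IsHomogeneous 1 := by
  obtain ⟨c, rfl⟩ := hf
  exact IsHomogeneous.sum _ _ _ fun j _ => isHomogeneous_C_mul_X _ _

namespace Fin

def ltPairs (n : ℕ) : Finset ((_ : Fin n) × Fin n) :=
  Finset.univ.sigma fun i => Finset.Ioi i

theorem mem_ltPairs {n : ℕ} {q : (_ : Fin n) × Fin n} : q ∈ ltPairs n ↔ q.1 < q.2 := by
  simp [ltPairs]

theorem card_ltPairs (n : ℕ) : (ltPairs n).card = n * (n - 1) / 2 := by
  simp only [ltPairs, Finset.card_sigma, card_Ioi]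
  rw [sum_univ_eq_sum_range (fun i => n - 1 - i), Finset.sum_range_reflect (fun i => i) n,
    Finset.sum_range_id]

end Fin

section VectorSpan

variable {k V : Type*} [Field k] [AddCommGroup V] [Module k V] {n : ℕ} (v : Fin n → V)

theorem span_image_ltPairs_sub_eq_vectorSpan :
    Submodule.span k ((fun q : (_ : Fin n) × Fin n => v q.1 - v q.2) ''
      (Fin.ltPairs n : Set _)) = vectorSpan k (Set.range v) := by
  apply le_antisymm
  · rw [Submodule.span_le]
    rintro _ ⟨q, -, rfl⟩
    exact vsub_mem_vectorSpan k (Set.mem_range_self q.1) (Set.mem_range_self q.2)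
  · rw [vectorSpan_def, Submodule.span_le]
    rintro _ ⟨_, ⟨i, rfl⟩, _, ⟨j, rfl⟩, rfl⟩
    rcases lt_trichotomy i j with hij | rfl | hji
    · exact Submodule.subset_span ⟨⟨i, j⟩, Fin.mem_ltPairs.mpr hij, rfl⟩
    · simp
    · change v i - v j ∈ _
      rw [← neg_sub]
      exact neg_mem (Submodule.subset_span ⟨⟨j, i⟩, Fin.mem_ltPairs.mpr hji, rfl⟩)

theorem LinearIndependent.finrank_vectorSpan (hv : LinearIndependent k v) :
    Module.finrank k (vectorSpan k (Set.range v)) = n - 1 := by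
  cases n with
  | zero => simp [Set.range_eq_empty]
  | succ m => exact hv.affineIndependent.finrank_vectorSpan (by simp)

end VectorSpan

theorem vandermonde_equiv_necessary_general (F : Type*) [RCLike F] (n p : ℕ)
    (ℓ : Fin p → MvPolynomial (Fin n) F) (hℓ : ∀ i, IsHomLin (ℓ i))
    (L : Fin n → MvPolynomial (Fin n) F) (hL : ∀ i, IsHomLin (L i))
    (hind : LinearIndependent F L)
    (heq : ∏ i, ℓ i = ∏ i : Fin n, ∏ j ∈ Finset.Ioi i, (L i - L j)) :
    p = n * (n - 1) / 2 ∧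
      Module.finrank F (Submodule.span F (Set.range ℓ)) = n - 1 := by
  have hprod : ∏ i, ℓ i = ∏ q ∈ Fin.ltPairs n, (L q.1 - L q.2) := by
    rw [heq, Fin.ltPairs, Finset.prod_sigma']
  have hℓ1 : ∀ i ∈ Finset.univ, (ℓ i).IsHomogeneous 1 := fun i _ => (hℓ i).isHomogeneous
  have hL1 : ∀ q ∈ Fin.ltPairs n, (L q.1 - L q.2).IsHomogeneous 1 := fun q _ =>
    (hL q.1).isHomogeneous.sub (hL q.2).isHomogeneous
  have hne : ∏ i, ℓ i ≠ 0 := by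
    refine hprod ▸ Finset.prod_ne_zero_iff.mpr fun q hq => sub_ne_zero.mpr ?_
    exact hind.injective.ne (Fin.mem_ltPairs.mp hq).ne
  constructor
  · rw [← Fin.card_ltPairs, ← MvPolynomial.card_eq_of_prod_eq hℓ1 hL1 hne hprod,
      Finset.card_univ, Fintype.card_fin]
  · rw [← Set.image_univ, ← Finset.coe_univ,
      MvPolynomial.span_image_eq_of_prod_eq hℓ1 hL1 hne hprod,
      span_image_ltPairs_sub_eq_vectorSpan, hind.finrank_vectorSpan]

/-- If a product of homogeneous linear forms `ℓ₁ ⋯ ℓ_p` equals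
`∏_{i<j} (L_i - L_j)` for linearly independent homogeneous linear forms `L₁,…,Lₙ`,
then `p = n(n-1)/2` and the span of the `ℓᵢ` has dimension `n - 1`. -/
theorem vandermonde_equiv_necessary (F : Type*) [RCLike F] (n p : ℕ) (hn : 2 ≤ n)
    (ℓ : Fin p → MvPolynomial (Fin n) F) (hℓ : ∀ i, IsHomLin (ℓ i))
    (L : Fin n → MvPolynomial (Fin n) F) (hL : ∀ i, IsHomLin (L i))
    (hind : LinearIndependent F L)
    (heq : ∏ i, ℓ i = ∏ i : Fin n, ∏ j ∈ Finset.Ioi i, (L i - L j)) :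
    p = n * (n - 1) / 2 ∧
      Module.finrank F (Submodule.span F (Set.range ℓ)) = n - 1 :=
  vandermonde_equiv_necessary_general F n p ℓ hℓ L hL hind heq
end

section
/- Let F be ℝ or ℂ, let n ≥ 2, and let f ∈ F[x_1,…,x_n]. Then f is linearly equivalent to the Vandermonde polynomial VD_n (i.e., f = ∏_{1 ≤ i < j ≤ n}(L'_i − L'_j) for some linearly independent homogeneous linear forms L'_1,…,L'_n in F[x_1,…,x_n]) if and only if there exist linearly independent homogeneous linear forms L_1, …, L_{n−1} in F[x_1,…,x_n] such that f = (∏_{i=1}^{n−1} L_i) · ∏_{1 ≤ i < j ≤ n−1}(L_i − L_j). -/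
/-!
Shifting a family by its last member, `L'ᵢ = (L'ᵢ - L'ₙ) + L'ₙ`, is a unitriangular change of
family, so it preserves linear independence, and it splits the Vandermonde product of `L'` into
`∏_{i<n} (L'ᵢ - L'ₙ)` times the Vandermonde product of the differences `L'ᵢ - L'ₙ`. Conversely,
`n - 1` independent linear forms `Lᵢ` do not span the `n`-dimensional space of linear forms, so
some linear form `w` lies outside their span, and `L' = (L₁ + w, …, L_{n-1} + w, w)` works.
-/

open MvPolynomial

theorem Fin.prod_Ioi_castSucc {M : Type*} [CommMonoid M] {m : ℕ} (h : Fin (m + 1) → M)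
    (i : Fin m) :
    ∏ j ∈ Finset.Ioi i.castSucc, h j = h (Fin.last m) * ∏ j ∈ Finset.Ioi i, h j.castSucc := by
  rw [← Finset.Ioc_top, Fin.top_eq_last,
    ← Finset.prod_Ioo_mul_eq_prod_Ioc (Fin.castSucc_lt_last i), ← Fin.map_castSuccEmb_Ioi,
    Finset.prod_map, mul_comm]
  rfl

theorem prod_Ioi_sub_snoc_add {A : Type*} [CommRing A] {m : ℕ} (v : Fin m → A) (w : A) :
    ∏ i : Fin (m + 1), ∏ j ∈ Finset.Ioi i, ((Fin.snoc (fun k => v k + w) w : Fin (m + 1) → A) i -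
        (Fin.snoc (fun k => v k + w) w : Fin (m + 1) → A) j) =
      (∏ i, v i) * ∏ i : Fin m, ∏ j ∈ Finset.Ioi i, (v i - v j) := by
  have hlast : Finset.Ioi (Fin.last m) = ∅ := Finset.Ioi_top
  simp [Fin.prod_univ_castSucc, Fin.prod_Ioi_castSucc, Finset.prod_mul_distrib, hlast]

theorem linearIndependent_snoc_add_iff {R M : Type*} [Ring R] [AddCommGroup M] [Module R M]
    {m : ℕ} (v : Fin m → M) (w : M) :
    LinearIndependent R (Fin.snoc (fun i => v i + w) w : Fin (m + 1) → M) ↔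
      LinearIndependent R (Fin.snoc v w : Fin (m + 1) → M) := by
  convert linearIndependent_add_smul_iff (R := R) (v := (Fin.snoc v w : Fin (m + 1) → M))
    (c := Fin.snoc (fun _ => 1) 0) (i := Fin.last m) (by simp) using 2
  funext j
  cases j using Fin.lastCases <;> simp

theorem Submodule.exists_mem_notMem_span_range {K V ι : Type*} [DivisionRing K] [AddCommGroup V]
    [Module K V] [Fintype ι] {W : Submodule K V} {v : ι → V} (hv : ∀ i, v i ∈ W)
    (hcard : Fintype.card ι < Module.finrank K W) : ∃ w ∈ W, w ∉ Submodule.span K (Set.range v) :=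
  SetLike.exists_of_lt <| Submodule.lt_of_le_of_finrank_lt_finrank
    (Submodule.span_le.2 (Set.range_subset_iff.2 hv)) ((finrank_range_le_card v).trans_lt hcard)

theorem finrank_span_range_X (F : Type*) [Field F] (n : ℕ) :
    Module.finrank F (Submodule.span F (Set.range (X : Fin n → MvPolynomial (Fin n) F))) = n := by
  rw [finrank_span_eq_card (linearIndependent_X (Fin n) F), Fintype.card_fin]

theorem isHomLin_iff_mem_span {F : Type*} [Field F] {n : ℕ} {f : MvPolynomial (Fin n) F} :
    IsHomLin f ↔ f ∈ Submodule.span F (Set.range X) := by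
  simp only [IsHomLin, Submodule.mem_span_range_iff_exists_fun, smul_eq_C_mul, eq_comm]

theorem exists_vandermonde_iff_exists_prod_mul_vandermonde {F : Type*} [Field F] (m : ℕ)
    (f : MvPolynomial (Fin (m + 1)) F) :
    (∃ L' : Fin (m + 1) → MvPolynomial (Fin (m + 1)) F, (∀ i, IsHomLin (L' i)) ∧
        LinearIndependent F L' ∧
        f = ∏ i : Fin (m + 1), ∏ j ∈ Finset.Ioi i, (L' i - L' j)) ↔
      (∃ L : Fin m → MvPolynomial (Fin (m + 1)) F, (∀ i, IsHomLin (L i)) ∧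
        LinearIndependent F L ∧
        f = (∏ i, L i) * ∏ i : Fin m, ∏ j ∈ Finset.Ioi i, (L i - L j)) := by
  simp only [isHomLin_iff_mem_span]
  constructor
  · rintro ⟨L', hhom, hli, rfl⟩
    set v : Fin m → MvPolynomial (Fin (m + 1)) F := fun i => L' i.castSucc - L' (Fin.last m)
    have hL' : L' = Fin.snoc (fun i => v i + L' (Fin.last m)) (L' (Fin.last m)) := by
      funext j
      cases j using Fin.lastCases <;> simp [v]
    rw [hL', linearIndependent_snoc_add_iff, linearIndependent_finSnoc] at hli
    exact ⟨v, fun i => sub_mem (hhom _) (hhom _), hli.1, by rw [hL', prod_Ioi_sub_snoc_add]⟩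
  · rintro ⟨L, hhom, hli, rfl⟩
    obtain ⟨w, hwX, hwL⟩ := Submodule.exists_mem_notMem_span_range hhom
      (by rw [finrank_span_range_X, Fintype.card_fin]; omega)
    refine ⟨Fin.snoc (fun i => L i + w) w, fun j => ?_,
      (linearIndependent_snoc_add_iff L w).2 (hli.finSnoc hwL), (prod_Ioi_sub_snoc_add L w).symm⟩
    cases j using Fin.lastCases <;> simp [add_mem (hhom _) hwX, hwX]

/-- `f` is linearly equivalent to the Vandermonde polynomial `VD_n` iff
`f = (∏_{i=1}^{n-1} L_i) · ∏_{1 ≤ i < j ≤ n-1}(L_i - L_j)` for some linearly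
independent homogeneous linear forms `L₁, …, L_{n-1}`. -/
theorem vandermonde_equiv_characterization (F : Type*) [RCLike F] (n : ℕ) (hn : 2 ≤ n)
    (f : MvPolynomial (Fin n) F) :
    (∃ L' : Fin n → MvPolynomial (Fin n) F, (∀ i, IsHomLin (L' i)) ∧
        LinearIndependent F L' ∧
        f = ∏ i : Fin n, ∏ j ∈ Finset.Ioi i, (L' i - L' j)) ↔
      (∃ L : Fin (n - 1) → MvPolynomial (Fin n) F, (∀ i, IsHomLin (L i)) ∧
        LinearIndependent F L ∧
        f = (∏ i, L i) * ∏ i : Fin (n - 1), ∏ j ∈ Finset.Ioi i, (L i - L j)) := by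
  obtain ⟨m, rfl⟩ : ∃ m, n = m + 1 := ⟨n - 1, by omega⟩
  exact exists_vandermonde_iff_exists_prod_mul_vandermonde m f
end

section
/- Over F = ℝ (or ℂ), the polynomial (x_1 − y_1)(x_2 − y_2) ∈ F[x_1,x_2,y_1,y_2] does not belong to VD_aff: there is no m ≥ 1 and no affine linear forms ℓ_1, …, ℓ_m ∈ F[x_1,x_2,y_1,y_2] such that (x_1 − y_1)(x_2 − y_2) = ∏_{1 ≤ i < j ≤ m} (ℓ_i − ℓ_j). -/
/-!
Write `ℓᵢ = dᵢ + cᵢ ⬝ᵥ x`. The total degree of `∏_{i<j} (ℓᵢ - ℓⱼ)` is the number of pairs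
`i < j` with `cᵢ ≠ cⱼ`, so at most two such pairs exist; three indices with pairwise different
linear parts would already give three, hence the `cᵢ` take at most two values `u, u'`. Pick
points `P, Q` with `(u - u') ⬝ᵥ P = (u - u') ⬝ᵥ Q` at which `(x₁ - y₁)(x₂ - y₂)` takes different
values. Then `ℓᵢ(P) - ℓᵢ(Q)` is the same for all `i`, so the product of differences takes the
same value at `P` and `Q`, a contradiction.
-/

open MvPolynomial

/-- An affine linear form `d + c₁x₁ + ⋯ + cₙxₙ` (a polynomial of degree at most 1). -/
def IsAffLin {F : Type*} [Field F] {n : ℕ} (f : MvPolynomial (Fin n) F) : Prop :=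
  ∃ (c : Fin n → F) (d : F), f = C d + ∑ j, C (c j) * X j

open Finset

namespace MvPolynomial

variable {σ R : Type*} [CommSemiring R] [NoZeroDivisors R]

theorem totalDegree_prod_of_isDomain {ι : Type*} {s : Finset ι} {P : ι → MvPolynomial σ R}
    (H : ∀ i ∈ s, P i ≠ 0) : totalDegree (∏ i ∈ s, P i) = ∑ i ∈ s, totalDegree (P i) := by
  cases exists_wellFoundedGT σ
  simp [← degree_degLexDegree, MonomialOrder.degree_prod H]

end MvPolynomial

section AffineForm

variable {σ F : Type*} [Fintype σ] [Field F]

noncomputable def affineForm (c : σ → F) (d : F) : MvPolynomial σ F := C d + ∑ k, C (c k) * X k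

theorem affineForm_sub_affineForm (c c' : σ → F) (d d' : F) :
    affineForm c d - affineForm c' d' = affineForm (c - c') (d - d') := by
  simp only [affineForm, map_sub, Pi.sub_apply, sub_mul, sum_sub_distrib]
  ring

@[simp] theorem eval_affineForm (c : σ → F) (d : F) (x : σ → F) :
    eval x (affineForm c d) = d + c ⬝ᵥ x := by
  simp [affineForm, dotProduct]

theorem coeff_single_affineForm (c : σ → F) (d : F) (k : σ) :
    coeff (Finsupp.single k 1) (affineForm c d) = c k := by
  classical
  simp [affineForm, coeff_sum, coeff_C_mul, coeff_X, coeff_C, Finsupp.single_eq_single_iff,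
    eq_comm (a := (0 : σ →₀ ℕ))]

theorem totalDegree_affineForm (c : σ → F) (d : F) [Decidable (c = 0)] :
    totalDegree (affineForm c d) = if c = 0 then 0 else 1 := by
  split_ifs with hc
  · simp [affineForm, hc]
  obtain ⟨k, hk⟩ := Function.ne_iff.1 hc
  refine le_antisymm ?_ ?_
  · refine (totalDegree_add _ _).trans (max_le (by simp) ?_)
    refine (totalDegree_finsetSum _ _).trans (Finset.sup_le fun j _ => ?_)
    exact (totalDegree_mul _ _).trans (by simp [totalDegree_X])
  · have : Finsupp.single k 1 ∈ (affineForm c d).support := by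
      simpa [coeff_single_affineForm] using hk
    simpa using le_totalDegree this

theorem totalDegree_prod_sub_affineForm {ι : Type*} [Fintype ι] [LinearOrder ι]
    [LocallyFiniteOrderTop ι] [DecidableEq σ] [DecidableEq F]
    (c : ι → σ → F) (d : ι → F)
    (h : ∏ i, ∏ j ∈ Ioi i, (affineForm (c i) (d i) - affineForm (c j) (d j)) ≠ 0) :
    totalDegree (∏ i, ∏ j ∈ Ioi i, (affineForm (c i) (d i) - affineForm (c j) (d j))) =
      #{p : ι × ι | p.1 < p.2 ∧ c p.1 ≠ c p.2} := by
  rw [← prod_finset_product' {p : ι × ι | p.1 < p.2} _ _ (by simp)] at h ⊢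
  rw [totalDegree_prod_of_isDomain fun p hp => (prod_ne_zero_iff.1 h) p hp]
  simp only [affineForm_sub_affineForm, totalDegree_affineForm, sub_eq_zero]
  rw [card_filter, sum_filter]
  simp [ite_and]

end AffineForm

section Pairs

variable {ι α : Type*} [Fintype ι] [LinearOrder ι] [DecidableEq α]

theorem three_le_card_filter_lt_ne {c : ι → α} {i j k : ι} (hij : c i ≠ c j) (hik : c i ≠ c k)
    (hjk : c j ≠ c k) : 3 ≤ #{p : ι × ι | p.1 < p.2 ∧ c p.1 ≠ c p.2} := by
  wlog h₁ : i < j generalizing i j k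
  · exact this hij.symm hjk hik ((ne_of_apply_ne c hij).lt_or_gt.resolve_left h₁)
  wlog h₂ : j < k generalizing i j k
  · have hkj : k < j := (ne_of_apply_ne c hjk).lt_or_gt.resolve_left h₂
    rcases (ne_of_apply_ne c hik).lt_or_gt with hik' | hki
    · exact this hik hij hjk.symm hik' hkj
    · exact this hik.symm hjk.symm hij hki h₁
  calc 3 = #{(i, j), (i, k), (j, k)} := by
        rw [card_insert_of_notMem, card_pair] <;> simp [h₁.ne, h₂.ne]
    _ ≤ _ := card_le_card (by simp [insert_subset_iff, h₁, h₂, h₁.trans h₂, hij, hik, hjk])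

theorem exists_forall_eq_or_eq_of_card_filter_lt_ne_le_two [Nonempty α] {c : ι → α}
    (h : #{p : ι × ι | p.1 < p.2 ∧ c p.1 ≠ c p.2} ≤ 2) : ∃ u u', ∀ i, c i = u ∨ c i = u' := by
  by_cases hc : ∃ a b, c a ≠ c b
  · obtain ⟨a, b, hab⟩ := hc
    refine ⟨c a, c b, fun i => ?_⟩
    by_contra! hi
    exact (three_le_card_filter_lt_ne hab hi.1.symm hi.2.symm).not_gt (by omega)
  push Not at hc
  rcases isEmpty_or_nonempty ι with hι | ⟨⟨a⟩⟩
  · exact ⟨Classical.arbitrary α, Classical.arbitrary α, isEmptyElim⟩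
  · exact ⟨c a, c a, fun i => .inl (hc i a)⟩

end Pairs

theorem exists_dotProduct_eq_and_ne {F : Type*} [Field F] (h2 : (2 : F) ≠ 0) (w : Fin 4 → F) :
    ∃ P Q : Fin 4 → F, w ⬝ᵥ P = w ⬝ᵥ Q ∧
      (P 0 - P 2) * (P 1 - P 3) ≠ (Q 0 - Q 2) * (Q 1 - Q 3) := by
  have one_ne_neg_one : (1 : F) ≠ -1 := fun h => h2 (by linear_combination h)
  by_cases hA : w 0 = w 2
  · refine ⟨![1, 1, 0, 0], ![0, 1, 1, 0], ?_, by simpa using one_ne_neg_one⟩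
    simp [dotProduct, Fin.sum_univ_four, hA, add_comm]
  by_cases hB : w 1 = w 3
  · refine ⟨![1, 1, 0, 0], ![1, 0, 0, 1], ?_, by simpa using one_ne_neg_one⟩
    simp [dotProduct, Fin.sum_univ_four, hB]
  refine ⟨![w 1 - w 3, w 2 - w 0, w 3 - w 1, w 0 - w 2], 0, ?_, ?_⟩
  · rw [dotProduct_zero]
    simp only [dotProduct, Fin.sum_univ_four, Matrix.cons_val]
    ring
  · have hB' : 2 * (w 1 - w 3) ≠ 0 := mul_ne_zero h2 (sub_ne_zero.2 hB)
    have hA' : 2 * (w 2 - w 0) ≠ 0 := mul_ne_zero h2 (sub_ne_zero.2 (Ne.symm hA))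
    simp only [Matrix.cons_val, Pi.zero_apply, sub_zero, mul_zero, ne_eq, mul_eq_zero, not_or]
    exact ⟨fun h => hB' (by linear_combination h), fun h => hA' (by linear_combination h)⟩

/-- The variables are `x₁ = X 0, x₂ = X 1, y₁ = X 2, y₂ = X 3`. -/
theorem product_not_in_VD_aff (F : Type*) [RCLike F] :
    ¬ ∃ (m : ℕ) (_ : 1 ≤ m) (ℓ : Fin m → MvPolynomial (Fin 4) F),
      (∀ i, IsAffLin (ℓ i)) ∧
      (X 0 - X 2) * (X 1 - X 3) = ∏ i : Fin m, ∏ j ∈ Finset.Ioi i, (ℓ i - ℓ j) := by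
  rintro ⟨m, -, ℓ, hℓ, heq⟩
  choose c d hcd using hℓ
  obtain rfl : ℓ = fun i => affineForm (c i) (d i) := funext hcd
  have hne : (X 0 - X 2) * (X 1 - X 3) ≠ (0 : MvPolynomial (Fin 4) F) := fun h => by
    simpa using congrArg (eval ![1, 1, 0, 0]) h
  have hdeg : #{p : Fin m × Fin m | p.1 < p.2 ∧ c p.1 ≠ c p.2} ≤ 2 := by
    rw [← totalDegree_prod_sub_affineForm c d (heq ▸ hne), ← heq]
    grw [totalDegree_mul, totalDegree_sub, totalDegree_sub]
    simp [totalDegree_X]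
  obtain ⟨u, u', hc⟩ := exists_forall_eq_or_eq_of_card_filter_lt_ne_le_two hdeg
  obtain ⟨P, Q, hPQ, hf⟩ := exists_dotProduct_eq_and_ne two_ne_zero (u - u')
  have hshift : ∀ i, eval P (affineForm (c i) (d i)) =
      eval Q (affineForm (c i) (d i)) + (u ⬝ᵥ P - u ⬝ᵥ Q) := by
    intro i
    rcases hc i with h | h <;> simp only [eval_affineForm, h, sub_dotProduct] at hPQ ⊢
    · ring
    · linear_combination -hPQ
  have hP := congrArg (eval P) heq
  have hQ := congrArg (eval Q) heq
  simp only [map_mul, map_sub, eval_X, map_prod, hshift, add_sub_add_right_eq_sub] at hP hQ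
  exact hf (hP.trans hQ.symm)
end

section
/- Over F = ℝ (or ℂ), the polynomial f = (x_1 − y_1) + (x_2 − y_2) ∈ F[x_1,x_2,y_1,y_2] belongs to VD_homo (indeed f = L_1 − L_2 = VD_2(L_1,L_2) for the homogeneous linear forms L_1 = x_1 + x_2 and L_2 = y_1 + y_2), but f does not belong to VD_proj: there is no m ≥ 1 and no ρ_1, …, ρ_m, each of which is either one of the variables x_1, x_2, y_1, y_2 or a constant from F, such that f = ∏_{1 ≤ i < j ≤ m}(ρ_i − ρ_j). -/
open MvPolynomial

/-- Either a variable or a constant: the allowed entries in simple projections. -/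
def IsVarOrConst {F : Type*} [Field F] {n : ℕ} (ρ : MvPolynomial (Fin n) F) : Prop :=
  (∃ j, ρ = X j) ∨ (∃ c : F, ρ = C c)

/-!
Sending every variable to a single variable `t` kills `f = (x₁ - y₁) + (x₂ - y₂)`, so if
`f = ∏_{i<j} (ρᵢ - ρⱼ)` then some `ρᵢ` and `ρⱼ` (`i < j`) become equal under this substitution.
For variables or constants this means either `ρᵢ = ρⱼ`, forcing `f = 0`, or `ρᵢ = x_a`,
`ρⱼ = x_b`, forcing `f` to vanish on the hyperplane `x_a = x_b`; neither is the case.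
-/

def vandermondeProd {R : Type*} [CommRing R] {m : ℕ} (v : Fin m → R) : R :=
  ∏ i, ∏ j ∈ Finset.Ioi i, (v i - v j)

theorem vandermondeProd_fin_two {R : Type*} [CommRing R] (a b : R) :
    vandermondeProd ![a, b] = a - b := by
  have h0 : Finset.Ioi (0 : Fin 2) = {1} := by decide
  have h1 : Finset.Ioi (1 : Fin 2) = ∅ := by decide
  simp [vandermondeProd, Fin.prod_univ_two, h0, h1]

theorem map_vandermondeProd {R S G : Type*} [CommRing R] [CommRing S] [FunLike G R S]
    [RingHomClass G R S] (φ : G) {m : ℕ} (v : Fin m → R) :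
    φ (vandermondeProd v) = vandermondeProd (φ ∘ v) := by
  simp [vandermondeProd, map_prod, map_sub]

theorem vandermondeProd_eq_zero_iff {R : Type*} [CommRing R] [IsDomain R] {m : ℕ}
    {v : Fin m → R} : vandermondeProd v = 0 ↔ ∃ i j, i < j ∧ v i = v j := by
  simp [vandermondeProd, Finset.prod_eq_zero_iff, sub_eq_zero]

theorem IsVarOrConst.eq_or_exists_eq_X_of_aeval_eq {F : Type*} [Field F] {n : ℕ}
    {ρ σ : MvPolynomial (Fin n) F} (hρ : IsVarOrConst ρ) (hσ : IsVarOrConst σ)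
    (h : aeval (fun _ ↦ Polynomial.X (R := F)) ρ = aeval (fun _ ↦ Polynomial.X (R := F)) σ) :
    ρ = σ ∨ ∃ a b, ρ = X a ∧ σ = X b := by
  rcases hρ with ⟨a, rfl⟩ | ⟨c, rfl⟩ <;> rcases hσ with ⟨b, rfl⟩ | ⟨d, rfl⟩
  · exact Or.inr ⟨a, b, rfl, rfl⟩
  · simp only [aeval_X, aeval_C, Polynomial.algebraMap_eq] at h
    exact absurd h (Polynomial.X_ne_C d)
  · simp only [aeval_X, aeval_C, Polynomial.algebraMap_eq] at h
    exact absurd h.symm (Polynomial.X_ne_C c)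
  · simp only [aeval_C, Polynomial.algebraMap_eq, Polynomial.C_inj] at h
    exact Or.inl (h ▸ rfl)

theorem aeval_X_sub_X_add_X_sub_X {R : Type*} [CommRing R] :
    aeval (fun _ ↦ Polynomial.X (R := R))
      ((X 0 - X 2) + (X 1 - X 3) : MvPolynomial (Fin 4) R) = 0 := by
  simp

theorem exists_eval_X_sub_X_add_X_sub_X_ne_zero {R : Type*} [CommRing R] [CharZero R]
    (a b : Fin 4) : ∃ p : Fin 4 → R, p a = p b ∧ eval p ((X 0 - X 2) + (X 1 - X 3)) ≠ 0 := by
  refine ⟨Function.update ![1, 2, 4, 8] a (![1, 2, 4, 8] b), ?_, ?_⟩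
  · by_cases hab : b = a <;> simp [Function.update, hab]
  · fin_cases a <;> fin_cases b <;> simp <;> norm_num

/-- With variables `x₁ = X 0, x₂ = X 1, y₁ = X 2, y₂ = X 3`: the polynomial
`(x₁ - y₁) + (x₂ - y₂)` is a homogeneous projection of a Vandermonde polynomial
(it is in `VD_homo`), but it is not a simple projection (not in `VD_proj`). -/
theorem sum_in_VD_homo_not_in_VD_proj (F : Type*) [RCLike F] :
    (∃ (m : ℕ) (_ : 1 ≤ m) (ℓ : Fin m → MvPolynomial (Fin 4) F),
      (∀ i, IsHomLin (ℓ i)) ∧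
      (X 0 - X 2) + (X 1 - X 3) = ∏ i : Fin m, ∏ j ∈ Finset.Ioi i, (ℓ i - ℓ j)) ∧
    ¬ (∃ (m : ℕ) (_ : 1 ≤ m) (ρ : Fin m → MvPolynomial (Fin 4) F),
      (∀ i, IsVarOrConst (ρ i)) ∧
      (X 0 - X 2) + (X 1 - X 3) = ∏ i : Fin m, ∏ j ∈ Finset.Ioi i, (ρ i - ρ j)) := by
  constructor
  · refine ⟨2, one_le_two, ![X 0 + X 1, X 2 + X 3], fun i ↦ ?_, ?_⟩
    · fin_cases i
      · exact ⟨![1, 1, 0, 0], by simp [Fin.sum_univ_four]⟩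
      · exact ⟨![0, 0, 1, 1], by simp [Fin.sum_univ_four]⟩
    · rw [← vandermondeProd, vandermondeProd_fin_two]
      ring
  · rintro ⟨m, -, ρ, hρ, hf⟩
    change _ = vandermondeProd ρ at hf
    obtain ⟨i, j, hij, hρij⟩ := vandermondeProd_eq_zero_iff.mp <| show
        vandermondeProd (aeval (fun _ ↦ Polynomial.X (R := F)) ∘ ρ) = 0 by
      rw [← map_vandermondeProd, ← hf, aeval_X_sub_X_add_X_sub_X]
    have hf_vanish (p : Fin 4 → F) (h : eval p (ρ i) = eval p (ρ j)) :
        eval p ((X 0 - X 2) + (X 1 - X 3)) = 0 := by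
      rw [hf, map_vandermondeProd, vandermondeProd_eq_zero_iff]
      exact ⟨i, j, hij, h⟩
    rcases (hρ i).eq_or_exists_eq_X_of_aeval_eq (hρ j) hρij with h | ⟨a, b, ha, hb⟩
    · obtain ⟨p, -, hp⟩ := exists_eval_X_sub_X_add_X_sub_X_ne_zero (R := F) 0 0
      exact hp (hf_vanish p (by rw [h]))
    · obtain ⟨p, hpab, hp⟩ := exists_eval_X_sub_X_add_X_sub_X_ne_zero (R := F) a b
      exact hp (hf_vanish p (by simp [ha, hb, hpab]))
end

section
/- Over F = ℝ (or ℂ), the product (x_1 − y_1)(x_2 − y_2) is not a finite F-linear combination of Vandermonde polynomials: there do not exist s ≥ 1, natural numbers n_1,…,n_s ≥ 1, and scalars α_1,…,α_s ∈ F such that (x_1 − y_1)(x_2 − y_2) = Σ_{i=1}^s α_i · VD_{n_i}(z_1,…,z_{n_i}) where z_1, z_2, … is any enumeration of the ambient variables and VD_{n_i}(z_1,…,z_{n_i}) = ∏_{1 ≤ a < b ≤ n_i}(z_a − z_b). Consequently the class Σ·VD, which contains the linear forms x_1 − y_1 and x_2 − y_2, is not closed under multiplication. -/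
/-!
Every Vandermonde polynomial `VD_n` is homogeneous of degree `n.choose 2`, and no binomial
coefficient `n.choose 2` equals `2`. So the degree-`2` homogeneous component of any linear
combination of Vandermonde polynomials vanishes, whereas `(x₁ - y₁)(x₂ - y₂)` is a nonzero
homogeneous polynomial of degree `2`.
-/

open MvPolynomial Finset

theorem Nat.choose_two_ne_two (n : ℕ) : n.choose 2 ≠ 2 := by
  rcases Nat.lt_or_ge n 4 with hn | hn
  · interval_cases n <;> decide
  · have : 6 ≤ n.choose 2 := Nat.choose_le_choose 2 hn
    omega

theorem Finset.sum_range_card_Ioo (n : ℕ) : ∑ a ∈ range n, #(Ioo a n) = n.choose 2 := by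
  have hcard : ∀ a ∈ range n, #(Ioo a n) = n - 1 - a := fun a _ => by
    rw [Nat.card_Ioo]; omega
  rw [sum_congr rfl hcard, sum_range_reflect (fun a => a) n, sum_range_id, Nat.choose_two_right]

namespace MvPolynomial

variable {σ R : Type*} [CommRing R]

theorem IsHomogeneous.eq_zero_of_eq_sum {ι : Type*} {s : Finset ι} {p : MvPolynomial σ R}
    {q : ι → MvPolynomial σ R} {d : ℕ} {e : ι → ℕ} (hp : p.IsHomogeneous d)
    (hq : ∀ i ∈ s, (q i).IsHomogeneous (e i)) (he : ∀ i ∈ s, e i ≠ d)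
    (h : p = ∑ i ∈ s, q i) : p = 0 := by
  rw [← homogeneousComponent_eq_self hp, h, map_sum]
  refine sum_eq_zero fun i hi => ?_
  rw [homogeneousComponent_of_mem (hq i hi), if_neg (he i hi).symm]

variable (R) in
noncomputable def vandermonde (v : ℕ → σ) (n : ℕ) : MvPolynomial σ R :=
  ∏ a ∈ range n, ∏ b ∈ Ioo a n, (X (v a) - X (v b))

theorem isHomogeneous_vandermonde (v : ℕ → σ) (n : ℕ) :
    (vandermonde R v n).IsHomogeneous (n.choose 2) := by
  rw [← sum_range_card_Ioo]
  refine IsHomogeneous.prod _ _ _ fun a _ => ?_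
  simpa using IsHomogeneous.prod (Ioo a n) (fun b => (X (v a) - X (v b) : MvPolynomial σ R))
    (fun _ => 1) fun b _ => (isHomogeneous_X R (v a)).sub (isHomogeneous_X R (v b))

theorem X_sub_X_ne_zero [Nontrivial R] {i j : σ} (hij : i ≠ j) :
    (X i - X j : MvPolynomial σ R) ≠ 0 :=
  sub_ne_zero.mpr fun h => hij (X_injective h)

end MvPolynomial

/-- With variables `x₁ = X 0, y₁ = X 1, x₂ = X 2, y₂ = X 3` among countably many
ambient variables: for any enumeration `z` of the ambient variables, the product
`(x₁ - y₁)(x₂ - y₂)` is not a finite linear combination of the Vandermonde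
polynomials `VD_{n_i}(z_1, …, z_{n_i}) = ∏_{a < b < n_i} (X (z a) - X (z b))`.
Consequently the class `Σ·VD`, which contains `x₁ - y₁` and `x₂ - y₂`,
is not closed under multiplication. -/
theorem product_not_sum_of_VD (F : Type*) [RCLike F] (z : ℕ ≃ ℕ) :
    ¬ ∃ (s : ℕ) (_ : 1 ≤ s) (nn : Fin s → ℕ) (_ : ∀ i, 1 ≤ nn i) (α : Fin s → F),
      ((X 0 - X 1) * (X 2 - X 3) : MvPolynomial ℕ F) =
        ∑ i, C (α i) *
          ∏ a ∈ Finset.range (nn i), ∏ b ∈ Finset.Ioo a (nn i), (X (z a) - X (z b)) := by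
  rintro ⟨s, -, nn, -, α, h⟩
  have hdeg : ((X 0 - X 1) * (X 2 - X 3) : MvPolynomial ℕ F).IsHomogeneous 2 :=
    ((isHomogeneous_X F 0).sub (isHomogeneous_X F 1)).mul
      ((isHomogeneous_X F 2).sub (isHomogeneous_X F 3))
  have hne : ((X 0 - X 1) * (X 2 - X 3) : MvPolynomial ℕ F) ≠ 0 :=
    mul_ne_zero (X_sub_X_ne_zero (by decide)) (X_sub_X_ne_zero (by decide))
  exact hne <| hdeg.eq_zero_of_eq_sum
    (fun i _ => (isHomogeneous_vandermonde (R := F) z (nn i)).C_mul (α i))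
    (fun i _ => Nat.choose_two_ne_two (nn i)) h
end

section
/- Let F be ℝ or ℂ and let f ∈ F[x_1,…,x_n] be a member of VD_proj, i.e., f = ∏_{1 ≤ a < b ≤ m}(ρ_a − ρ_b) for some m ≥ 1 where each ρ_a is either one of the variables x_1,…,x_n or a constant from F. Then for every subset S ⊆ {1,…,n} with |S| = k, the restricted evaluation dimension satisfies RED_S(f) ≤ (k+1)². -/
open MvPolynomial

/-- The restricted evaluation dimension `RED_S(f)`: the dimension of the span of all
polynomials obtained from `f` by substituting, for each `i ∈ S`, either `0`, `1`,
or leaving `x_i` unchanged (`*`), and leaving all variables outside `S` unchanged. -/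
noncomputable def RED {F : Type*} [Field F] {n : ℕ} (S : Finset (Fin n))
    (f : MvPolynomial (Fin n) F) : ℕ :=
  Module.finrank F (Submodule.span F
    {g : MvPolynomial (Fin n) F | ∃ σ : Fin n → MvPolynomial (Fin n) F,
      (∀ i ∈ S, σ i = 0 ∨ σ i = 1 ∨ σ i = X i) ∧
      (∀ i ∉ S, σ i = X i) ∧
      g = MvPolynomial.bind₁ σ f})

/-!
A `{0,1,*}`-substitution acts on `f = ∏_{a<b} (ρ_a - ρ_b)` only through the variables occurring
among the `ρ_a`. If it sends two distinct such variables to the same constant, two factors'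
entries coincide and the restriction vanishes. Otherwise at most one occurring variable is sent
to `0` and at most one to `1`, so the restriction is one of the `(k+1)²` polynomials obtained by
choosing, in `S ∪ {none}`, the variable set to `0` and the variable set to `1`.
-/

theorem prod_prod_Ioi_sub_eq_zero {R : Type*} [CommRing R] {m : ℕ} (ρ : Fin m → R)
    {a b : Fin m} (hab : a ≠ b) (h : ρ a = ρ b) :
    ∏ a : Fin m, ∏ b ∈ Finset.Ioi a, (ρ a - ρ b) = 0 := by
  wlog hlt : a < b generalizing a b
  · exact this hab.symm h.symm (hab.lt_or_gt.resolve_left hlt)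
  exact Finset.prod_eq_zero (Finset.mem_univ a) <|
    Finset.prod_eq_zero (Finset.mem_Ioi.mpr hlt) (sub_eq_zero.mpr h)

theorem Finset.exists_option_map_val_eq_some_iff {ι : Type*} {S : Finset ι} {p : ι → Prop}
    (hpS : ∀ j, p j → j ∈ S) (hp : ∀ i j, p i → p j → i = j) :
    ∃ z : Option S, ∀ j, z.map Subtype.val = some j ↔ p j := by
  by_cases h : ∃ j, p j
  · obtain ⟨j, hj⟩ := h
    refine ⟨some ⟨j, hpS j hj⟩, fun i => ?_⟩
    simp only [Option.map_some, Option.some.injEq]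
    exact ⟨fun h => h ▸ hj, hp j i hj⟩
  · push Not at h
    exact ⟨none, fun j => by simp [h j]⟩

section

variable {F : Type*} [Field F] {n m : ℕ}

noncomputable def pointSubst (S : Finset (Fin n)) (z o : Option S) (i : Fin n) :
    MvPolynomial (Fin n) F :=
  if z.map Subtype.val = some i then 0
  else if o.map Subtype.val = some i then 1
  else X i

theorem bind₁_prod_prod_Ioi_sub_eq_zero (ρ : Fin m → MvPolynomial (Fin n) F)
    (σ : Fin n → MvPolynomial (Fin n) F) {i j : Fin n} (hij : i ≠ j) {a b : Fin m}
    (ha : ρ a = X i) (hb : ρ b = X j) (h : σ i = σ j) :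
    bind₁ σ (∏ a : Fin m, ∏ b ∈ Finset.Ioi a, (ρ a - ρ b)) = 0 := by
  have hab : a ≠ b := fun hab => hij (X_injective (R := F) (by rw [← ha, ← hb, hab]))
  simp only [map_prod, map_sub]
  exact prod_prod_Ioi_sub_eq_zero (fun a => bind₁ σ (ρ a)) hab (by simp [ha, hb, h])

variable {S : Finset (Fin n)} {σ : Fin n → MvPolynomial (Fin n) F}

theorem bind₁_prod_prod_Ioi_sub_eq_zero_or_exists_option (ρ : Fin m → MvPolynomial (Fin n) F)
    (c : MvPolynomial (Fin n) F) :
    bind₁ σ (∏ a : Fin m, ∏ b ∈ Finset.Ioi a, (ρ a - ρ b)) = 0 ∨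
    ∃ z : Option S, ∀ j, z.map Subtype.val = some j ↔ j ∈ S ∧ σ j = c ∧ ∃ a, ρ a = X j := by
  by_cases h : ∀ i j, (i ∈ S ∧ σ i = c ∧ ∃ a, ρ a = X i) →
      (j ∈ S ∧ σ j = c ∧ ∃ a, ρ a = X j) → i = j
  · exact Or.inr (Finset.exists_option_map_val_eq_some_iff (fun j hj => hj.1) h)
  · push Not at h
    obtain ⟨i, j, ⟨-, hi, a, ha⟩, ⟨-, hj, b, hb⟩, hij⟩ := h
    exact Or.inl (bind₁_prod_prod_Ioi_sub_eq_zero ρ σ hij ha hb (hi.trans hj.symm))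

theorem eq_pointSubst {P : Fin n → Prop} {z o : Option S}
    (h₁ : ∀ i ∈ S, σ i = 0 ∨ σ i = 1 ∨ σ i = X i) (h₂ : ∀ i ∉ S, σ i = X i)
    (hz : ∀ j, z.map Subtype.val = some j ↔ j ∈ S ∧ σ j = 0 ∧ P j)
    (ho : ∀ j, o.map Subtype.val = some j ↔ j ∈ S ∧ σ j = 1 ∧ P j) {j : Fin n} (hj : P j) :
    σ j = pointSubst S z o j := by
  unfold pointSubst
  split_ifs with hzj hoj
  · exact ((hz j).1 hzj).2.1
  · exact ((ho j).1 hoj).2.1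
  · by_cases hjS : j ∈ S
    · rcases h₁ j hjS with h | h | h
      · exact absurd ((hz j).2 ⟨hjS, h, hj⟩) hzj
      · exact absurd ((ho j).2 ⟨hjS, h, hj⟩) hoj
      · exact h
    · exact h₂ j hjS

theorem bind₁_prod_prod_Ioi_sub_eq_zero_or_eq_pointSubst (ρ : Fin m → MvPolynomial (Fin n) F)
    (hρ : ∀ a, IsVarOrConst (ρ a))
    (h₁ : ∀ i ∈ S, σ i = 0 ∨ σ i = 1 ∨ σ i = X i) (h₂ : ∀ i ∉ S, σ i = X i) :
    bind₁ σ (∏ a : Fin m, ∏ b ∈ Finset.Ioi a, (ρ a - ρ b)) = 0 ∨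
    ∃ z o : Option S, bind₁ σ (∏ a : Fin m, ∏ b ∈ Finset.Ioi a, (ρ a - ρ b)) =
      bind₁ (pointSubst S z o) (∏ a : Fin m, ∏ b ∈ Finset.Ioi a, (ρ a - ρ b)) := by
  rcases bind₁_prod_prod_Ioi_sub_eq_zero_or_exists_option (S := S) ρ 0 with h | ⟨z, hz⟩
  · exact Or.inl h
  rcases bind₁_prod_prod_Ioi_sub_eq_zero_or_exists_option (S := S) ρ 1 with h | ⟨o, ho⟩
  · exact Or.inl h
  have hagree : ∀ a, bind₁ σ (ρ a) = bind₁ (pointSubst S z o) (ρ a) := by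
    intro a
    rcases hρ a with ⟨j, hj⟩ | ⟨c, hc⟩
    · rw [hj, bind₁_X_right, bind₁_X_right]
      exact eq_pointSubst h₁ h₂ hz ho ⟨a, hj⟩
    · rw [hc, bind₁_C_right, bind₁_C_right]
  exact Or.inr ⟨z, o, by simp only [map_prod, map_sub, hagree]⟩

theorem RED_le_card {ι : Type*} [Fintype ι] (S : Finset (Fin n)) (f : MvPolynomial (Fin n) F)
    (Φ : ι → MvPolynomial (Fin n) F)
    (h : ∀ σ : Fin n → MvPolynomial (Fin n) F, (∀ i ∈ S, σ i = 0 ∨ σ i = 1 ∨ σ i = X i) →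
      (∀ i ∉ S, σ i = X i) → bind₁ σ f = 0 ∨ ∃ p, bind₁ σ f = Φ p) :
    RED S f ≤ Fintype.card ι := by
  have hsub : {g | ∃ σ : Fin n → MvPolynomial (Fin n) F,
      (∀ i ∈ S, σ i = 0 ∨ σ i = 1 ∨ σ i = X i) ∧ (∀ i ∉ S, σ i = X i) ∧ g = bind₁ σ f} ⊆
      insert 0 (Set.range Φ) := by
    rintro g ⟨σ, h₁, h₂, rfl⟩
    rcases h σ h₁ h₂ with h0 | ⟨p, hp⟩
    · exact Or.inl h0
    · exact Or.inr ⟨p, hp.symm⟩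
  have := FiniteDimensional.span_of_finite F (Set.finite_range Φ)
  calc RED S f ≤ Module.finrank F (Submodule.span F (Set.range Φ)) :=
        Submodule.finrank_mono ((Submodule.span_mono hsub).trans_eq Submodule.span_insert_zero)
    _ ≤ Fintype.card ι := finrank_range_le_card Φ

end

/-- Every simple projection of a Vandermonde polynomial has restricted evaluation
dimension at most `(k+1)²` with respect to any set `S` of `k` variables. -/
theorem RED_of_VD_proj_le (F : Type*) [RCLike F] (n k : ℕ)
    (f : MvPolynomial (Fin n) F)
    (hf : ∃ (m : ℕ) (_ : 1 ≤ m) (ρ : Fin m → MvPolynomial (Fin n) F),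
      (∀ a, IsVarOrConst (ρ a)) ∧
      f = ∏ a : Fin m, ∏ b ∈ Finset.Ioi a, (ρ a - ρ b))
    (S : Finset (Fin n)) (hS : S.card = k) :
    RED S f ≤ (k + 1) ^ 2 := by
  obtain ⟨m, -, ρ, hρ, rfl⟩ := hf
  calc RED S _ ≤ Fintype.card (Option S × Option S) :=
        RED_le_card S _ (fun p => bind₁ (pointSubst S p.1 p.2) _) fun σ h₁ h₂ =>
          (bind₁_prod_prod_Ioi_sub_eq_zero_or_eq_pointSubst ρ hρ h₁ h₂).imp_right
            fun ⟨z, o, h⟩ => ⟨(z, o), h⟩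
    _ = (k + 1) ^ 2 := by simp [Fintype.card_option, hS, sq]
end

section
/- Let F be ℝ or ℂ, let 1 ≤ k ≤ n, and let Sym_{n,k} ∈ F[x_1,…,x_n] be the elementary symmetric polynomial of degree k in n variables. Then for every subset S ⊆ {1,…,n} with |S| = k, the restricted evaluation dimension satisfies RED_S(Sym_{n,k}) ≥ 2^k − 1. -/
/-!
For `A ⊆ S`, substitute `x_i := 1` for `i ∈ S \ A` in `Sym_{n,k}`. A `k`-set `T` whose surviving
part `T \ (S \ A)` is a subset `B` of `S` must be `S` itself, so the coefficient of `x^B` in this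
restriction is `1` if `B = A` and `0` otherwise. Hence the `2^k` restrictions indexed by the
subsets of `S` are linearly independent, and `RED_S(Sym_{n,k}) ≥ 2^k`.
-/

open MvPolynomial

open Finset

theorem Finsupp.sum_single_one_injective {σ : Type*} :
    Function.Injective fun s : Finset σ => ∑ i ∈ s, Finsupp.single i 1 := by
  intro s t h
  have h' := congrArg Finsupp.toMultiset h
  simp only [Finsupp.toMultiset_sum_single, one_nsmul] at h'
  exact Finset.val_injective h'

theorem Finset.sdiff_eq_iff_of_card_eq {σ : Type*} [DecidableEq σ] {S T U B : Finset σ}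
    (hU : U ⊆ S) (hB : B ⊆ S) (hT : #T = #S) : T \ U = B ↔ T = S ∧ B = S \ U := by
  refine ⟨fun h => ?_, fun ⟨hTS, hBS⟩ => hTS ▸ hBS.symm⟩
  have hTS : T ⊆ S := fun i hi => by
    by_cases hiU : i ∈ U
    · exact hU hiU
    · exact hB (h ▸ mem_sdiff.2 ⟨hi, hiU⟩)
  have hTS : T = S := eq_of_subset_of_card_le hTS hT.ge
  exact ⟨hTS, by rw [← h, hTS]⟩

theorem MvPolynomial.linearIndependent_of_coeff_eq_ite {σ R ι : Type*} [CommSemiring R]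
    [DecidableEq ι] (p : ι → MvPolynomial σ R) (m : ι → σ →₀ ℕ)
    (h : ∀ i j, coeff (m j) (p i) = if i = j then 1 else 0) : LinearIndependent R p := by
  have hcoeffs : (LinearMap.pi fun j => lcoeff R (m j)) ∘ p = fun i => Pi.single i 1 := by
    ext i j
    simp [h, Pi.single_apply, eq_comm]
  refine LinearIndependent.of_comp (LinearMap.pi fun j => lcoeff R (m j)) ?_
  rw [hcoeffs]
  exact Pi.linearIndependent_single_one ι R

section Substitution

variable {σ R : Type*} [CommSemiring R] [DecidableEq σ]

noncomputable def substOne (U : Finset σ) : σ → MvPolynomial σ R :=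
  fun i => if i ∈ U then 1 else X i

variable [Fintype σ]

theorem bind₁_substOne_esymm (U : Finset σ) (k : ℕ) :
    bind₁ (substOne U) (esymm σ R k) =
      ∑ T ∈ powersetCard k univ, monomial (∑ i ∈ T \ U, Finsupp.single i 1) 1 := by
  rw [esymm, map_sum]
  refine sum_congr rfl fun T _ => ?_
  rw [map_prod, monomial_sum_one, sdiff_eq_filter, prod_filter]
  refine prod_congr rfl fun i _ => ?_
  rw [bind₁_X_right]
  by_cases hi : i ∈ U <;> simp [substOne, hi, X]

theorem coeff_bind₁_substOne_esymm {S A B : Finset σ} (hA : A ⊆ S) (hB : B ⊆ S) :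
    coeff (∑ i ∈ B, Finsupp.single i 1) (bind₁ (substOne (S \ A)) (esymm σ R #S)) =
      if A = B then 1 else 0 := by
  have hterm : ∀ T ∈ powersetCard #S univ,
      coeff (∑ i ∈ B, Finsupp.single i 1) (monomial (∑ i ∈ T \ (S \ A), Finsupp.single i 1) 1) =
        if T = S ∧ A = B then (1 : R) else 0 := fun T hT => by
    simp only [coeff_monomial, Finsupp.sum_single_one_injective.eq_iff,
      sdiff_eq_iff_of_card_eq sdiff_subset hB (mem_powersetCard_univ.1 hT),
      Finset.sdiff_sdiff_eq_self hA, eq_comm (a := B)]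
  rw [bind₁_substOne_esymm, coeff_sum, sum_congr rfl hterm]
  simp only [ite_and, sum_ite_eq', mem_powersetCard_univ, if_true]

end Substitution

section RestrictedEvaluation

variable {σ R : Type*} [CommSemiring R]

def restrictions (S : Finset σ) (f : MvPolynomial σ R) : Set (MvPolynomial σ R) :=
  {g | ∃ τ : σ → MvPolynomial σ R, (∀ i ∈ S, τ i = 0 ∨ τ i = 1 ∨ τ i = X i) ∧
    (∀ i ∉ S, τ i = X i) ∧ g = bind₁ τ f}

theorem restrictions_finite [Finite σ] (S : Finset σ) (f : MvPolynomial σ R) :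
    (restrictions S f).Finite := by
  refine ((Set.Finite.pi' fun i => Set.toFinite {0, 1, X i}).image
    fun τ : σ → MvPolynomial σ R => bind₁ τ f).subset ?_
  rintro g ⟨τ, hS, hout, rfl⟩
  refine ⟨τ, fun i => ?_, rfl⟩
  by_cases hi : i ∈ S
  · simpa using hS i hi
  · simp [hout i hi]

theorem bind₁_substOne_mem_restrictions [DecidableEq σ] {S U : Finset σ} (hU : U ⊆ S)
    (f : MvPolynomial σ R) : bind₁ (substOne U) f ∈ restrictions S f := by
  refine ⟨substOne U, fun i _ => ?_, fun i hi => if_neg fun hiU => hi (hU hiU), rfl⟩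
  by_cases hiU : i ∈ U <;> simp [substOne, hiU]

end RestrictedEvaluation

theorem RED_eq_finrank_span_restrictions {F : Type*} [Field F] {n : ℕ} (S : Finset (Fin n))
    (f : MvPolynomial (Fin n) F) :
    RED S f = Module.finrank F (Submodule.span F (restrictions S f)) :=
  rfl

theorem card_le_RED {F ι : Type*} [Field F] [Fintype ι] {n : ℕ} {S : Finset (Fin n)}
    {f : MvPolynomial (Fin n) F} {p : ι → MvPolynomial (Fin n) F} (hp : LinearIndependent F p)
    (hmem : ∀ i, p i ∈ restrictions S f) : Fintype.card ι ≤ RED S f := by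
  have : FiniteDimensional F (Submodule.span F (restrictions S f)) :=
    FiniteDimensional.span_of_finite F (restrictions_finite S f)
  rw [RED_eq_finrank_span_restrictions, ← finrank_span_eq_card hp]
  exact Submodule.finrank_mono (Submodule.span_mono (Set.range_subset_iff.2 hmem))

theorem RED_esymm_lower_bound_general (F : Type*) [RCLike F] (n k : ℕ)
    (S : Finset (Fin n)) (hS : S.card = k) :
    2 ^ k - 1 ≤ RED S (MvPolynomial.esymm (Fin n) F k) := by
  subst hS
  have hindep : LinearIndependent F fun A : S.powerset =>
      bind₁ (substOne (S \ A)) (esymm (Fin n) F #S) :=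
    linearIndependent_of_coeff_eq_ite _ (fun B => ∑ i ∈ B.1, Finsupp.single i 1) fun A B =>
      (coeff_bind₁_substOne_esymm (mem_powerset.1 A.2) (mem_powerset.1 B.2)).trans
        (if_congr Subtype.ext_iff.symm rfl rfl)
  have hcard := card_le_RED hindep fun _ => bind₁_substOne_mem_restrictions sdiff_subset _
  rw [Fintype.card_coe, card_powerset] at hcard
  omega

/-- For any set `S` of `k` variables, the elementary symmetric polynomial of degree
`k` in `n` variables has restricted evaluation dimension at least `2^k - 1`. -/
theorem RED_esymm_lower_bound (F : Type*) [RCLike F] (n k : ℕ)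
    (hk : 1 ≤ k) (hkn : k ≤ n)
    (S : Finset (Fin n)) (hS : S.card = k) :
    2 ^ k - 1 ≤ RED S (MvPolynomial.esymm (Fin n) F k) :=
  RED_esymm_lower_bound_general F n k S hS
end
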